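/- arXiv:2111.12620 — 2 statements merged into one kernel-verified Lean document; each statement's English description precedes it below -/
import Mathlib

section
/- Newton–Kantorovich existence and uniqueness (affine-covariant form): let Y be a real Banach space, U ⊆ Y open, G : U → Y continuously Fréchet differentiable, and y₀ ∈ U such that the Fréchet derivative DG(y₀) is invertible with bounded inverse. Suppose β, L > 0 satisfy βL < 1/2, the closed ball B(y₀, L^{-1}) is contained in U, ‖DG(y₀)^{-1}(DG(z) − DG(y))‖ ≤ L‖z − y‖ for all y, z ∈ B(y₀, L^{-1}), and ‖DG(y₀)^{-1}G(y₀)‖ ≤ β. Then there exists y* with ‖y* − y₀‖ ≤ (1 − √(1 − 2Lβ))/L such that G(y*) = 0, and y* is the unique zero of G in the closed ball B(y₀, L^{-1}). -/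
/-!
The simplified Newton map `N y = y - DG(y₀)⁻¹ G y` has derivative `DG(y₀)⁻¹ (DG y₀ - DG y)`, of
norm at most `L ‖y - y₀‖`; integrating along the segment from `y` to `z` gives
`‖N z - N y‖ ≤ L · (‖y - y₀‖ + ‖z - y₀‖) / 2 · ‖z - y‖`. Let `r = (1 - √(1 - 2Lβ)) / L` be the
smaller root of `L r² / 2 - r + β`. Since `‖N y₀ - y₀‖ ≤ β`, the map `N` sends `B(y₀, r)` into
itself and contracts there with factor `L r < 1`, so it has a fixed point `y*`, i.e. a zero of `G`.
For another zero `z ∈ B(y₀, L⁻¹)` the factor is at most `(L r + 1) / 2 < 1`, which forces `z = y*`.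
-/

open Metric Set

universe u v

section FixedPoint

variable {α : Type u} [MetricSpace α] [CompleteSpace α]

theorem exists_isFixedPt_of_dist_le_mul {f : α → α} {s : Set α} {k : ℝ} (hs : IsClosed s)
    (hne : s.Nonempty) (hmaps : MapsTo f s s) (hk : k < 1)
    (hf : ∀ x ∈ s, ∀ y ∈ s, dist (f x) (f y) ≤ k * dist x y) : ∃ x ∈ s, Function.IsFixedPt f x := by
  have hlip : LipschitzOnWith k.toNNReal f s := LipschitzOnWith.of_dist_le_mul fun x hx y hy =>
    (hf x hx y hy).trans (mul_le_mul_of_nonneg_right (Real.le_coe_toNNReal k) dist_nonneg)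
  obtain ⟨x, hx⟩ := hne
  obtain ⟨y, hy, hfix, -⟩ := ContractingWith.exists_fixedPoint' hs.isComplete hmaps
    ⟨Real.toNNReal_lt_one.2 hk, hlip.mapsToRestrict hmaps⟩ hx (edist_ne_top _ _)
  exact ⟨y, hy, hfix⟩

end FixedPoint

section SegmentEstimate

variable {E : Type u} {F : Type v} [NormedAddCommGroup E] [NormedSpace ℝ E]
  [NormedAddCommGroup F] [NormedSpace ℝ F]

theorem norm_sub_le_of_norm_deriv_le_affine {g g' : ℝ → F} {a b : ℝ}
    (hg : ContinuousOn g (Icc 0 1))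
    (hg' : ∀ t ∈ Ico (0 : ℝ) 1, HasDerivWithinAt g (g' t) (Ici t) t)
    (bound : ∀ t ∈ Ico (0 : ℝ) 1, ‖g' t‖ ≤ a + (b - a) * t) :
    ‖g 1 - g 0‖ ≤ (a + b) / 2 := by
  have hB : ∀ t : ℝ, HasDerivAt (fun t => a * t + (b - a) / 2 * t ^ 2) (a + (b - a) * t) t := by
    intro t
    refine (((hasDerivAt_id' t).const_mul a).add
      ((hasDerivAt_pow 2 t).const_mul ((b - a) / 2))).congr_deriv ?_
    push_cast
    ring
  have h := image_norm_le_of_norm_deriv_right_le_deriv_boundary (f := fun t => g t - g 0)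
    (hg.sub continuousOn_const) (fun t ht => (hg' t ht).sub_const (g 0)) (by simp) hB bound
    (right_mem_Icc.2 zero_le_one)
  convert h using 1
  ring

theorem Convex.norm_image_sub_le_of_norm_hasFDerivWithin_le_mul_norm_sub {f : E → F}
    {f' : E → E →L[ℝ] F} {s : Set E} {c : E} {K : ℝ} (hs : Convex ℝ s)
    (hf : ∀ x ∈ s, HasFDerivWithinAt f (f' x) s x) (hK : 0 ≤ K)
    (bound : ∀ x ∈ s, ‖f' x‖ ≤ K * ‖x - c‖) {y z : E} (hy : y ∈ s) (hz : z ∈ s) :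
    ‖f z - f y‖ ≤ K * ((‖y - c‖ + ‖z - c‖) / 2) * ‖z - y‖ := by
  set γ : ℝ → E := fun t => y + t • (z - y)
  have hγs : MapsTo γ (Icc 0 1) s := fun t ht => hs.add_smul_sub_mem hy hz ht
  have hγc : ∀ t ∈ Icc (0 : ℝ) 1, ‖γ t - c‖ ≤ (1 - t) * ‖y - c‖ + t * ‖z - c‖ := by
    intro t ht
    have hγt : γ t - c = (1 - t) • (y - c) + t • (z - c) := by simp only [γ]; module
    rw [hγt]
    refine (norm_add_le _ _).trans_eq ?_
    rw [norm_smul_of_nonneg (sub_nonneg.2 ht.2), norm_smul_of_nonneg ht.1]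
  have hderiv : ∀ t ∈ Icc (0 : ℝ) 1,
      HasDerivWithinAt (f ∘ γ) (f' (γ t) (z - y)) (Icc 0 1) t := fun t ht =>
    (hf _ (hγs ht)).comp_hasDerivWithinAt t
      ((((hasDerivAt_id t).smul_const (z - y)).const_add y).hasDerivWithinAt.congr_deriv
        (one_smul ℝ _)) hγs
  have h := norm_sub_le_of_norm_deriv_le_affine (a := K * ‖y - c‖ * ‖z - y‖)
    (b := K * ‖z - c‖ * ‖z - y‖) (fun t ht => (hderiv t ht).continuousWithinAt)
    (fun t ht => (hderiv t (Ico_subset_Icc_self ht)).mono_of_mem_nhdsWithin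
      (Filter.mem_of_superset (Icc_mem_nhdsGE ht.2) (Icc_subset_Icc_left ht.1)))
    (fun t ht => by
      have ht' := Ico_subset_Icc_self ht
      calc ‖f' (γ t) (z - y)‖ ≤ K * ‖γ t - c‖ * ‖z - y‖ :=
            (f' (γ t)).le_of_opNorm_le (bound _ (hγs ht')) _
        _ ≤ K * ((1 - t) * ‖y - c‖ + t * ‖z - c‖) * ‖z - y‖ := by gcongr; exact hγc t ht'
        _ = _ := by ring)
  simp only [Function.comp, γ, zero_smul, add_zero, one_smul, add_sub_cancel] at h
  linarith

end SegmentEstimate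

section SimplifiedNewton

variable {E : Type u} {F : Type v} [NormedAddCommGroup E] [NormedSpace ℝ E]
  [NormedAddCommGroup F] [NormedSpace ℝ F]

def simplifiedNewtonMap (A : F →L[ℝ] E) (G : E → F) (y : E) : E := y - A (G y)

theorem simplifiedNewtonMap_eq_self_iff {A : F →L[ℝ] E} (hA : Function.Injective A) {G : E → F}
    {y : E} : simplifiedNewtonMap A G y = y ↔ G y = 0 := by
  rw [simplifiedNewtonMap, sub_eq_self, map_eq_zero_iff A hA]

theorem norm_simplifiedNewtonMap_sub_self (A : F →L[ℝ] E) (G : E → F) (y : E) :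
    ‖simplifiedNewtonMap A G y - y‖ = ‖A (G y)‖ := by
  rw [simplifiedNewtonMap, sub_sub_cancel_left, norm_neg]

theorem HasFDerivWithinAt.simplifiedNewtonMap {A : F →L[ℝ] E} {G : E → F} {G' : E →L[ℝ] F}
    {s : Set E} {y : E} (hG : HasFDerivWithinAt G G' s y) :
    HasFDerivWithinAt (simplifiedNewtonMap A G) (ContinuousLinearMap.id ℝ E - A.comp G') s y :=
  (hasFDerivWithinAt_id y s).sub (A.hasFDerivAt.comp_hasFDerivWithinAt y hG)

theorem norm_simplifiedNewtonMap_sub_le {A : F →L[ℝ] E} {G : E → F} {DG : E → E →L[ℝ] F}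
    {y₀ : E} {ρ L : ℝ} (hG : ∀ y ∈ closedBall y₀ ρ, HasFDerivAt G (DG y) y)
    (hA : A.comp (DG y₀) = ContinuousLinearMap.id ℝ E) (hL : 0 ≤ L)
    (hLip : ∀ y ∈ closedBall y₀ ρ, ‖A.comp (DG y - DG y₀)‖ ≤ L * ‖y - y₀‖)
    {y z : E} (hy : y ∈ closedBall y₀ ρ) (hz : z ∈ closedBall y₀ ρ) :
    ‖simplifiedNewtonMap A G z - simplifiedNewtonMap A G y‖
      ≤ L * ((‖y - y₀‖ + ‖z - y₀‖) / 2) * ‖z - y‖ := by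
  refine (convex_closedBall y₀ ρ).norm_image_sub_le_of_norm_hasFDerivWithin_le_mul_norm_sub
    (fun x hx => (hG x hx).hasFDerivWithinAt.simplifiedNewtonMap) hL (fun x hx => ?_) hy hz
  rw [← hA, ← ContinuousLinearMap.comp_sub, ← norm_neg, ← ContinuousLinearMap.comp_neg, neg_sub]
  exact hLip x hx

end SimplifiedNewton

noncomputable def kantorovichRadius (L β : ℝ) : ℝ := (1 - √(1 - 2 * L * β)) / L

section KantorovichRadius

variable {L β : ℝ}

theorem mul_kantorovichRadius (hL : L ≠ 0) :
    L * kantorovichRadius L β = 1 - √(1 - 2 * L * β) := by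
  rw [kantorovichRadius]
  field_simp

theorem half_mul_sq_kantorovichRadius_add (hL : L ≠ 0) (hLβ : 2 * L * β ≤ 1) :
    L / 2 * kantorovichRadius L β ^ 2 + β = kantorovichRadius L β := by
  have hs := Real.sq_sqrt (sub_nonneg.2 hLβ)
  rw [kantorovichRadius]
  generalize √(1 - 2 * L * β) = s at hs ⊢
  field_simp
  linear_combination hs

theorem kantorovichRadius_nonneg (hL : 0 < L) (hβ : 0 ≤ β) : 0 ≤ kantorovichRadius L β := by
  refine div_nonneg (sub_nonneg.2 (Real.sqrt_le_one.2 ?_)) hL.le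
  nlinarith

theorem kantorovichRadius_le_inv (hL : 0 < L) : kantorovichRadius L β ≤ L⁻¹ := by
  rw [kantorovichRadius, div_eq_mul_inv]
  exact mul_le_of_le_one_left (inv_nonneg.2 hL.le) (sub_le_self _ (Real.sqrt_nonneg _))

end KantorovichRadius

section KantorovichFixedPoint

variable {E : Type u} [NormedAddCommGroup E] {N : E → E} {y₀ : E} {β L : ℝ}

theorem mapsTo_closedBall_kantorovichRadius (hL : 0 < L) (hLβ : 2 * L * β ≤ 1)
    (hβ : ‖N y₀ - y₀‖ ≤ β)
    (hN : ∀ y ∈ closedBall y₀ L⁻¹, ∀ z ∈ closedBall y₀ L⁻¹,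
      ‖N z - N y‖ ≤ L * ((‖y - y₀‖ + ‖z - y₀‖) / 2) * ‖z - y‖) :
    MapsTo N (closedBall y₀ (kantorovichRadius L β)) (closedBall y₀ (kantorovichRadius L β)) := by
  intro y hy
  have hyr : ‖y - y₀‖ ≤ kantorovichRadius L β := mem_closedBall_iff_norm.1 hy
  have hcenter := hN y₀ (mem_closedBall_self (inv_nonneg.2 hL.le)) y
    (closedBall_subset_closedBall (kantorovichRadius_le_inv hL) hy)
  rw [sub_self, norm_zero, zero_add] at hcenter
  rw [mem_closedBall_iff_norm]
  calc ‖N y - y₀‖ ≤ ‖N y - N y₀‖ + ‖N y₀ - y₀‖ := norm_sub_le_norm_sub_add_norm_sub _ _ _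
    _ ≤ L / 2 * ‖y - y₀‖ ^ 2 + β := by linarith
    _ ≤ L / 2 * kantorovichRadius L β ^ 2 + β := by gcongr
    _ = kantorovichRadius L β := half_mul_sq_kantorovichRadius_add hL.ne' hLβ

theorem eq_of_isFixedPt_of_mem_closedBall_kantorovichRadius (hL : 0 < L) (hLβ : 2 * L * β < 1)
    (hN : ∀ y ∈ closedBall y₀ L⁻¹, ∀ z ∈ closedBall y₀ L⁻¹,
      ‖N z - N y‖ ≤ L * ((‖y - y₀‖ + ‖z - y₀‖) / 2) * ‖z - y‖)
    {y z : E} (hy : y ∈ closedBall y₀ (kantorovichRadius L β)) (hz : z ∈ closedBall y₀ L⁻¹)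
    (hfy : Function.IsFixedPt N y) (hfz : Function.IsFixedPt N z) : z = y := by
  have hs : 0 < √(1 - 2 * L * β) := Real.sqrt_pos.2 (by linarith)
  have hLy : L * ‖y - y₀‖ ≤ 1 - √(1 - 2 * L * β) := by
    rw [← mul_kantorovichRadius hL.ne']
    exact mul_le_mul_of_nonneg_left (mem_closedBall_iff_norm.1 hy) hL.le
  have hLz : L * ‖z - y₀‖ ≤ 1 := by
    rw [← mul_inv_cancel₀ hL.ne']
    exact mul_le_mul_of_nonneg_left (mem_closedBall_iff_norm.1 hz) hL.le
  have hcontr : ‖z - y‖ ≤ (1 - √(1 - 2 * L * β) / 2) * ‖z - y‖ := by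
    have h := hN y (closedBall_subset_closedBall (kantorovichRadius_le_inv hL) hy) z hz
    rw [hfy.eq, hfz.eq] at h
    exact h.trans (mul_le_mul_of_nonneg_right (by linarith) (norm_nonneg _))
  have hzero : ‖z - y‖ ≤ 0 := by nlinarith [norm_nonneg (z - y)]
  exact sub_eq_zero.1 (norm_le_zero_iff.1 hzero)

variable [CompleteSpace E]

theorem exists_isFixedPt_mem_closedBall_kantorovichRadius (hL : 0 < L) (hLβ : 2 * L * β < 1)
    (hβ : ‖N y₀ - y₀‖ ≤ β)
    (hN : ∀ y ∈ closedBall y₀ L⁻¹, ∀ z ∈ closedBall y₀ L⁻¹,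
      ‖N z - N y‖ ≤ L * ((‖y - y₀‖ + ‖z - y₀‖) / 2) * ‖z - y‖) :
    ∃ y ∈ closedBall y₀ (kantorovichRadius L β), Function.IsFixedPt N y := by
  have hs : 0 < √(1 - 2 * L * β) := Real.sqrt_pos.2 (by linarith)
  have hr := kantorovichRadius_le_inv (β := β) hL
  refine exists_isFixedPt_of_dist_le_mul isClosed_closedBall
    (nonempty_closedBall.2 (kantorovichRadius_nonneg hL ((norm_nonneg _).trans hβ)))
    (mapsTo_closedBall_kantorovichRadius hL hLβ.le hβ hN) (sub_lt_self 1 hs) fun y hy z hz => ?_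
  rw [dist_eq_norm, dist_eq_norm, ← mul_kantorovichRadius hL.ne']
  refine (hN z (closedBall_subset_closedBall hr hz) y (closedBall_subset_closedBall hr hy)).trans
    (mul_le_mul_of_nonneg_right ?_ (norm_nonneg _))
  gcongr
  linarith [mem_closedBall_iff_norm.1 hy, mem_closedBall_iff_norm.1 hz]

end KantorovichFixedPoint

theorem stmt10_general
    {Y : Type*} [NormedAddCommGroup Y] [NormedSpace ℝ Y] [CompleteSpace Y]
    (U : Set Y)
    (G : Y → Y) (DG : Y → Y →L[ℝ] Y)
    (hderiv : ∀ y ∈ U, HasFDerivAt G (DG y) y)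
    (y₀ : Y)
    (Dinv : Y →L[ℝ] Y)
    (hinv₁ : Dinv.comp (DG y₀) = ContinuousLinearMap.id ℝ Y)
    (hinv₂ : (DG y₀).comp Dinv = ContinuousLinearMap.id ℝ Y)
    (β L : ℝ) (hL : 0 < L) (hβL : β * L < 1 / 2)
    (hball : closedBall y₀ L⁻¹ ⊆ U)
    (hLip : ∀ y ∈ closedBall y₀ L⁻¹, ∀ z ∈ closedBall y₀ L⁻¹,
      ‖Dinv.comp (DG z - DG y)‖ ≤ L * ‖z - y‖)
    (hres : ‖Dinv (G y₀)‖ ≤ β) :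
    ∃ ystar : Y,
      ‖ystar - y₀‖ ≤ (1 - Real.sqrt (1 - 2 * L * β)) / L ∧
      G ystar = 0 ∧
      ∀ z ∈ closedBall y₀ L⁻¹, G z = 0 → z = ystar := by
  set N := simplifiedNewtonMap Dinv G
  have hLβ : 2 * L * β < 1 := by linarith
  have hinj : Function.Injective Dinv :=
    Function.LeftInverse.injective (g := DG y₀) fun y => congr($hinv₂ y)
  have hN : ∀ y ∈ closedBall y₀ L⁻¹, ∀ z ∈ closedBall y₀ L⁻¹,
      ‖N z - N y‖ ≤ L * ((‖y - y₀‖ + ‖z - y₀‖) / 2) * ‖z - y‖ := fun y hy z hz =>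
    norm_simplifiedNewtonMap_sub_le (fun x hx => hderiv x (hball hx)) hinv₁ hL.le
      (hLip y₀ (mem_closedBall_self (inv_nonneg.2 hL.le))) hy hz
  have hβ : ‖N y₀ - y₀‖ ≤ β := (norm_simplifiedNewtonMap_sub_self Dinv G y₀).trans_le hres
  obtain ⟨ystar, hystar, hfix⟩ := exists_isFixedPt_mem_closedBall_kantorovichRadius hL hLβ hβ hN
  refine ⟨ystar, mem_closedBall_iff_norm.1 hystar, (simplifiedNewtonMap_eq_self_iff hinj).1 hfix,
    fun z hz hGz => ?_⟩
  exact eq_of_isFixedPt_of_mem_closedBall_kantorovichRadius hL hLβ hN hystar hz hfix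
    ((simplifiedNewtonMap_eq_self_iff hinj).2 hGz)

/-- Newton–Kantorovich existence and uniqueness (affine-covariant form):
if `G` is `C¹` on an open set `U`, `DG(y₀)` is invertible with bounded inverse, `βL < 1/2`,
`B(y₀, L⁻¹) ⊆ U`, `‖DG(y₀)⁻¹(DG z − DG y)‖ ≤ L‖z − y‖` on `B(y₀, L⁻¹)`, and
`‖DG(y₀)⁻¹ G(y₀)‖ ≤ β`, then `G` has a zero `y*` with
`‖y* − y₀‖ ≤ (1 − √(1 − 2Lβ))/L`, unique in `B(y₀, L⁻¹)`. -/
theorem stmt10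
    {Y : Type*} [NormedAddCommGroup Y] [NormedSpace ℝ Y] [CompleteSpace Y]
    (U : Set Y) (hU : IsOpen U)
    (G : Y → Y) (DG : Y → Y →L[ℝ] Y)
    (hderiv : ∀ y ∈ U, HasFDerivAt G (DG y) y)
    (hcont : ContinuousOn DG U)
    (y₀ : Y) (hy₀ : y₀ ∈ U)
    (Dinv : Y →L[ℝ] Y)
    (hinv₁ : Dinv.comp (DG y₀) = ContinuousLinearMap.id ℝ Y)
    (hinv₂ : (DG y₀).comp Dinv = ContinuousLinearMap.id ℝ Y)
    (β L : ℝ) (hβ : 0 < β) (hL : 0 < L) (hβL : β * L < 1 / 2)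
    (hball : closedBall y₀ L⁻¹ ⊆ U)
    (hLip : ∀ y ∈ closedBall y₀ L⁻¹, ∀ z ∈ closedBall y₀ L⁻¹,
      ‖Dinv.comp (DG z - DG y)‖ ≤ L * ‖z - y‖)
    (hres : ‖Dinv (G y₀)‖ ≤ β) :
    ∃ ystar : Y,
      ‖ystar - y₀‖ ≤ (1 - Real.sqrt (1 - 2 * L * β)) / L ∧
      G ystar = 0 ∧
      ∀ z ∈ closedBall y₀ L⁻¹, G z = 0 → z = ystar :=
  stmt10_general U G DG hderiv y₀ Dinv hinv₁ hinv₂ β L hL hβL hball hLip hres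
end

section
/- Inexact Newton–Kantorovich iteration estimates: let Y be a real Banach space, U ⊆ Y open, G : U → Y continuously Fréchet differentiable, y₀ ∈ U with DG(y₀) invertible with bounded inverse, and β, L > 0 with βL < 1/2, B(y₀, L^{-1}) ⊆ U, ‖DG(y₀)^{-1}(DG(z) − DG(y))‖ ≤ L‖z − y‖ for all y, z ∈ B(y₀, L^{-1}), and ‖DG(y₀)^{-1}G(y₀)‖ ≤ β. Let θ ≥ 0 satisfy θ ≤ (1 − √(2βL))/(1 + √(2βL)), and suppose (y_j)_{j≥0} ⊆ U and (r_j)_{j≥0} ⊆ Y are sequences with y_0 = y₀ such that for every j ∈ ℕ₀: DG(y_j) is invertible, y_{j+1} = y_j + δ_j where DG(y_j)δ_j = −G(y_j) + r_j, and ‖DG(y₀)^{-1} r_j‖ ≤ θ‖DG(y₀)^{-1} G(y_j)‖. Then every iterate y_j lies in the closed ball B(y₀, √(2βL)/L), and, with y* denoting the unique zero of G in B(y₀, L^{-1}), for every j ∈ ℕ₀ one has ‖y_{j+1} − y*‖ ≤ [L(1+θ)/(2(1 − √(2βL)))·‖y_j − y*‖ + θ(1 + √(2βL))/(1 − √(2βL))]·‖y_j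 − y*‖. -/
/-!
Everything is done for the preconditioned map `f = DG(y₀)⁻¹ ∘ G`, whose derivative is the
identity at `y₀` and `L`-Lipschitz on `B(y₀, 1/L)`. There `‖f'(x) v‖ ≥ (1 - L‖x - y₀‖)‖v‖`, and
the first-order Taylor remainder of `f` is at most `L/2 ‖·‖²`.

Put `t = √(2βL) < 1`. By induction, `σⱼ = L‖yⱼ - y₀‖ ≤ t` and `L‖f(yⱼ)‖ ≤ t/2 (t - σⱼ)(1 - σⱼ)`:
the step has length at most `(1 + θ) t/2 (t - σⱼ) / L`, and the new residual is bounded by the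
Taylor remainder plus `θ` times the old residual; the bound on `θ` is exactly what keeps this
below the majorant at the new point. A zero `y*` of `G` in `B(y₀, 1/L)` satisfies
`L‖y* - y₀‖ ≤ t`, so by the mean value inequality `‖f(yⱼ)‖ ≤ (1 + t)‖yⱼ - y*‖`. Writing
`f'(yⱼ)(yⱼ₊₁ - y*)` as the Taylor remainder of `f` between `yⱼ` and `y*` plus the preconditioned
residual `DG(y₀)⁻¹ rⱼ` gives the error recursion.
-/

open Metric

theorem Convex.norm_image_sub_sub_le_of_hasFDerivAt_of_lipschitz
    {E F : Type*} [NormedAddCommGroup E] [NormedSpace ℝ E] [NormedAddCommGroup F]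
    [NormedSpace ℝ F] {f : E → F} {f' : E → E →L[ℝ] F} {s : Set E} {K : ℝ} {a b : E}
    (hs : Convex ℝ s) (hf : ∀ x ∈ s, HasFDerivAt f (f' x) x)
    (hf' : ∀ x ∈ s, ∀ y ∈ s, ‖f' y - f' x‖ ≤ K * ‖y - x‖) (ha : a ∈ s) (hb : b ∈ s) :
    ‖f b - f a - f' a (b - a)‖ ≤ K / 2 * ‖b - a‖ ^ 2 := by
  set v := b - a
  have hseg : ∀ τ ∈ Set.Icc (0 : ℝ) 1, a + τ • v ∈ s := fun τ hτ => by
    simpa [v, AffineMap.lineMap_apply_module', add_comm] using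
      hs.lineMap_mem ha hb hτ
  let g : ℝ → F := fun τ => f (a + τ • v) - f a - τ • f' a v
  have hg : ∀ τ ∈ Set.Icc (0 : ℝ) 1, HasDerivAt g (f' (a + τ • v) v - f' a v) τ := by
    intro τ hτ
    have hline : HasDerivAt (fun τ : ℝ => a + τ • v) v τ := by
      simpa using ((hasDerivAt_id τ).smul_const v).const_add a
    exact (((hf _ (hseg τ hτ)).comp_hasDerivAt τ hline).sub_const _).sub
      (by simpa using (hasDerivAt_id τ).smul_const (f' a v))
  have hB : ∀ τ, HasDerivAt (fun τ : ℝ => K * ‖v‖ ^ 2 / 2 * τ ^ 2) (K * ‖v‖ ^ 2 * τ) τ :=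
    fun τ => ((hasDerivAt_pow 2 τ).const_mul (K * ‖v‖ ^ 2 / 2)).congr_deriv (by ring)
  have hbound : ∀ τ ∈ Set.Ico (0 : ℝ) 1, ‖f' (a + τ • v) v - f' a v‖ ≤ K * ‖v‖ ^ 2 * τ := by
    intro τ hτ
    calc ‖f' (a + τ • v) v - f' a v‖ = ‖(f' (a + τ • v) - f' a) v‖ := rfl
      _ ≤ ‖f' (a + τ • v) - f' a‖ * ‖v‖ := ContinuousLinearMap.le_opNorm _ _
      _ ≤ K * ‖a + τ • v - a‖ * ‖v‖ := by
        gcongr; exact hf' a ha _ (hseg τ (Set.Ico_subset_Icc_self hτ))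
      _ = K * ‖v‖ ^ 2 * τ := by
        rw [add_sub_cancel_left, norm_smul, Real.norm_of_nonneg hτ.1]; ring
  have key := image_norm_le_of_norm_deriv_right_le_deriv_boundary
    (fun τ hτ => (hg τ hτ).continuousAt.continuousWithinAt)
    (fun τ hτ => (hg τ (Set.Ico_subset_Icc_self hτ)).hasDerivWithinAt)
    (by simp [g]) hB hbound (Set.right_mem_Icc.2 zero_le_one)
  calc ‖f b - f a - f' a (b - a)‖ = ‖g 1‖ := by simp [g, v]
    _ ≤ K / 2 * ‖b - a‖ ^ 2 := by linarith [key]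

theorem ContinuousLinearMap.one_sub_mul_norm_le_norm_apply {𝕜 E : Type*}
    [NontriviallyNormedField 𝕜] [NormedAddCommGroup E] [NormedSpace 𝕜 E] {T : E →L[𝕜] E}
    {c : ℝ} (hT : ‖T - ContinuousLinearMap.id 𝕜 E‖ ≤ c) (v : E) :
    (1 - c) * ‖v‖ ≤ ‖T v‖ := by
  have h : ‖T v - v‖ ≤ c * ‖v‖ :=
    ((T - ContinuousLinearMap.id 𝕜 E).le_opNorm v).trans
      (mul_le_mul_of_nonneg_right hT (norm_nonneg v))
  linarith [norm_sub_norm_le v (T v), norm_sub_rev v (T v)]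

theorem mem_closedBall_div_of_mul_norm_sub_le {E : Type*} [SeminormedAddCommGroup E]
    {x x₀ : E} {L r : ℝ} (hL : 0 < L) (h : L * ‖x - x₀‖ ≤ r) : x ∈ closedBall x₀ (r / L) := by
  rw [mem_closedBall_iff_norm, le_div_iff₀ hL, mul_comm]
  exact h

noncomputable def residualMajorant (t σ : ℝ) : ℝ := t / 2 * (t - σ) * (1 - σ)

lemma residualMajorant_antitoneOn {t : ℝ} (ht₀ : 0 ≤ t) (ht₁ : t ≤ 1) :
    AntitoneOn (residualMajorant t) (Set.Iic t) := by
  intro a (ha : a ≤ t) b (hb : b ≤ t) hab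
  unfold residualMajorant
  gcongr
  linarith

lemma sq_div_two_add_mul_residualMajorant_le {t θ σ x : ℝ} (ht₀ : 0 ≤ t) (ht₁ : t < 1)
    (hθ₀ : 0 ≤ θ) (hθ : θ * (1 + t) ≤ 1 - t) (hσ₀ : 0 ≤ σ) (hσt : σ ≤ t) (hx₀ : 0 ≤ x)
    (hx : x ≤ (1 + θ) * t / 2 * (t - σ)) :
    x ^ 2 / 2 + θ * residualMajorant t σ ≤ residualMajorant t (σ + x) := by
  have hm : (1 + θ) * t / 2 ≤ 1 - θ := by nlinarith
  have hmt : ((1 + θ) * t / 2) ^ 2 * (1 - t) + (1 + θ) * t / 2 * (1 + t) ≤ 1 - θ := by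
    nlinarith [mul_nonneg ht₀ hθ₀, mul_nonneg (mul_nonneg ht₀ ht₀) hθ₀,
      mul_nonneg (mul_nonneg ht₀ (sub_nonneg.2 ht₁.le)) (sub_nonneg.2 hθ)]
  have hm₀ : 0 ≤ (1 + θ) * t / 2 := by positivity
  generalize (1 + θ) * t / 2 = m at hm hmt hm₀ hx
  have hu : 0 ≤ t - σ := by linarith
  -- affine in `σ ∈ [0, t]`; `hmt` and `hm` are its instances at `σ = 0` and `σ = t`
  have hbracket : m ^ 2 * (t - σ) * (1 - t) + t * m * (2 * (t - σ) + 1 - t) ≤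
      (1 - θ) * t * (1 - σ) := by
    nlinarith [mul_nonneg (mul_nonneg hσ₀ (sub_nonneg.2 ht₁.le)) (sub_nonneg.2 hm),
      mul_nonneg hu (sub_nonneg.2 hmt)]
  have hmono : x ^ 2 * (1 - t) + t * x * (2 * (t - σ) + 1 - t) ≤
      (m * (t - σ)) ^ 2 * (1 - t) + t * (m * (t - σ)) * (2 * (t - σ) + 1 - t) := by
    have : 0 ≤ 2 * (t - σ) + 1 - t := by linarith
    gcongr
  unfold residualMajorant
  nlinarith [mul_nonneg hu (sub_nonneg.2 hbracket)]

lemma le_of_two_mul_le_sq_add_sq {σ t : ℝ} (ht₀ : 0 ≤ t) (ht₁ : t ≤ 1) (hσ₁ : σ ≤ 1)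
    (h : 2 * σ ≤ t ^ 2 + σ ^ 2) : σ ≤ t := by
  by_contra! hlt
  nlinarith [mul_pos (sub_pos.2 hlt) (by linarith : (0 : ℝ) < 2 - σ - t)]

def NewtonInvariant {E : Type*} [SeminormedAddCommGroup E] (f : E → E) (x₀ : E) (L t : ℝ)
    (x : E) : Prop :=
  L * ‖x - x₀‖ ≤ t ∧ L * ‖f x‖ ≤ residualMajorant t (L * ‖x - x₀‖)

section Preconditioned

variable {E : Type*} [NormedAddCommGroup E] [NormedSpace ℝ E] {f : E → E}
  {f' : E → E →L[ℝ] E} {x₀ : E} {L t θ : ℝ}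

theorem one_sub_mul_norm_le_norm_fderiv_apply (hL : 0 < L)
    (hf'₀ : f' x₀ = ContinuousLinearMap.id ℝ E)
    (hLip : ∀ x ∈ closedBall x₀ L⁻¹, ∀ y ∈ closedBall x₀ L⁻¹, ‖f' y - f' x‖ ≤ L * ‖y - x‖)
    {x : E} (hx : x ∈ closedBall x₀ L⁻¹) (v : E) :
    (1 - L * ‖x - x₀‖) * ‖v‖ ≤ ‖f' x v‖ :=
  (f' x).one_sub_mul_norm_le_norm_apply
    (hf'₀ ▸ hLip x₀ (mem_closedBall_self (inv_nonneg.2 hL.le)) x hx) v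

theorem mul_norm_sub_le_of_apply_eq_zero (hL : 0 < L)
    (hf : ∀ x ∈ closedBall x₀ L⁻¹, HasFDerivAt f (f' x) x)
    (hf'₀ : f' x₀ = ContinuousLinearMap.id ℝ E)
    (hLip : ∀ x ∈ closedBall x₀ L⁻¹, ∀ y ∈ closedBall x₀ L⁻¹, ‖f' y - f' x‖ ≤ L * ‖y - x‖)
    (ht₀ : 0 ≤ t) (ht₁ : t ≤ 1) (hf₀ : L * ‖f x₀‖ ≤ t ^ 2 / 2)
    {z : E} (hz : z ∈ closedBall x₀ L⁻¹) (hfz : f z = 0) :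
    L * ‖z - x₀‖ ≤ t := by
  have htaylor := (convex_closedBall x₀ L⁻¹).norm_image_sub_sub_le_of_hasFDerivAt_of_lipschitz
    hf hLip (mem_closedBall_self (inv_nonneg.2 hL.le)) hz
  rw [hfz, hf'₀, ContinuousLinearMap.id_apply] at htaylor
  have hdist : ‖z - x₀‖ ≤ ‖f x₀‖ + L / 2 * ‖z - x₀‖ ^ 2 := by
    calc ‖z - x₀‖ = ‖-f x₀ - (0 - f x₀ - (z - x₀))‖ := by congr 1; abel
      _ ≤ ‖f x₀‖ + L / 2 * ‖z - x₀‖ ^ 2 := by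
        grw [norm_sub_le, norm_neg, htaylor]
  have hz₁ : L * ‖z - x₀‖ ≤ 1 := by
    rw [mem_closedBall_iff_norm, ← one_div, le_div_iff₀ hL] at hz
    linarith
  refine le_of_two_mul_le_sq_add_sq ht₀ ht₁ hz₁ ?_
  nlinarith [mul_le_mul_of_nonneg_left hdist hL.le]

theorem NewtonInvariant.of_inexactNewtonStep (hL : 0 < L)
    (hf : ∀ x ∈ closedBall x₀ L⁻¹, HasFDerivAt f (f' x) x)
    (hf'₀ : f' x₀ = ContinuousLinearMap.id ℝ E)
    (hLip : ∀ x ∈ closedBall x₀ L⁻¹, ∀ y ∈ closedBall x₀ L⁻¹, ‖f' y - f' x‖ ≤ L * ‖y - x‖)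
    (ht₀ : 0 ≤ t) (ht₁ : t < 1) (hθ₀ : 0 ≤ θ) (hθ : θ * (1 + t) ≤ 1 - t) {x x' ρ : E}
    (hx : NewtonInvariant f x₀ L t x) (hstep : f' x (x' - x) = -f x + ρ)
    (hρ : ‖ρ‖ ≤ θ * ‖f x‖) :
    NewtonInvariant f x₀ L t x' := by
  obtain ⟨hσ, hres⟩ := hx
  have hmem : ∀ {w : E}, L * ‖w - x₀‖ ≤ t → w ∈ closedBall x₀ L⁻¹ := fun h => by
    simpa using mem_closedBall_div_of_mul_norm_sub_le hL (h.trans ht₁.le)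
  have hσ₀ : 0 ≤ L * ‖x - x₀‖ := by positivity
  have hd₀ : 0 ≤ L * ‖x' - x‖ := by positivity
  have hgap : 0 < 1 - L * ‖x - x₀‖ := by linarith
  have hdx : (1 - L * ‖x - x₀‖) * (L * ‖x' - x‖) ≤
      (1 - L * ‖x - x₀‖) * ((1 + θ) * t / 2 * (t - L * ‖x - x₀‖)) := by
    calc (1 - L * ‖x - x₀‖) * (L * ‖x' - x‖) = L * ((1 - L * ‖x - x₀‖) * ‖x' - x‖) := by ring
      _ ≤ L * ‖f' x (x' - x)‖ := by
        gcongr; exact one_sub_mul_norm_le_norm_fderiv_apply hL hf'₀ hLip (hmem hσ) _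
      _ ≤ L * ((1 + θ) * ‖f x‖) := by
        gcongr
        rw [hstep]
        linarith [norm_add_le (-f x) ρ, norm_neg (f x)]
      _ = (1 + θ) * (L * ‖f x‖) := by ring
      _ ≤ (1 + θ) * residualMajorant t (L * ‖x - x₀‖) := by gcongr
      _ = _ := by unfold residualMajorant; ring
  have hd := le_of_mul_le_mul_left hdx hgap
  have htri : L * ‖x' - x₀‖ ≤ L * ‖x - x₀‖ + L * ‖x' - x‖ := by
    rw [← mul_add, add_comm]; gcongr; exact norm_sub_le_norm_sub_add_norm_sub _ _ _
  have hsum : L * ‖x - x₀‖ + L * ‖x' - x‖ ≤ t := by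
    nlinarith [mul_nonneg (sub_nonneg.2 hσ) (by nlinarith : (0 : ℝ) ≤ 2 - (1 + θ) * t)]
  have hσ' : L * ‖x' - x₀‖ ≤ t := htri.trans hsum
  refine ⟨hσ', ?_⟩
  have htaylor := (convex_closedBall x₀ L⁻¹).norm_image_sub_sub_le_of_hasFDerivAt_of_lipschitz
    hf hLip (hmem hσ) (hmem hσ')
  have hfx' : ‖f x'‖ ≤ L / 2 * ‖x' - x‖ ^ 2 + θ * ‖f x‖ :=
    calc ‖f x'‖ = ‖(f x' - f x - f' x (x' - x)) + ρ‖ := by rw [hstep]; congr 1; abel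
      _ ≤ L / 2 * ‖x' - x‖ ^ 2 + θ * ‖f x‖ := (norm_add_le _ _).trans (add_le_add htaylor hρ)
  calc L * ‖f x'‖ ≤ (L * ‖x' - x‖) ^ 2 / 2 + θ * (L * ‖f x‖) := by
        nlinarith [mul_le_mul_of_nonneg_left hfx' hL.le]
    _ ≤ (L * ‖x' - x‖) ^ 2 / 2 + θ * residualMajorant t (L * ‖x - x₀‖) := by gcongr
    _ ≤ residualMajorant t (L * ‖x - x₀‖ + L * ‖x' - x‖) :=
      sq_div_two_add_mul_residualMajorant_le ht₀ ht₁ hθ₀ hθ hσ₀ hσ hd₀ hd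
    _ ≤ residualMajorant t (L * ‖x' - x₀‖) :=
      residualMajorant_antitoneOn ht₀ ht₁.le (Set.mem_Iic.2 hσ')
        (Set.mem_Iic.2 hsum) htri

theorem newtonInvariant_of_inexactNewton (hL : 0 < L)
    (hf : ∀ x ∈ closedBall x₀ L⁻¹, HasFDerivAt f (f' x) x)
    (hf'₀ : f' x₀ = ContinuousLinearMap.id ℝ E)
    (hLip : ∀ x ∈ closedBall x₀ L⁻¹, ∀ y ∈ closedBall x₀ L⁻¹, ‖f' y - f' x‖ ≤ L * ‖y - x‖)
    (ht₀ : 0 ≤ t) (ht₁ : t < 1) (hθ₀ : 0 ≤ θ) (hθ : θ * (1 + t) ≤ 1 - t)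
    (hf₀ : L * ‖f x₀‖ ≤ t ^ 2 / 2) {y ρ : ℕ → E} (hy₀ : y 0 = x₀)
    (hstep : ∀ j, f' (y j) (y (j + 1) - y j) = -f (y j) + ρ j)
    (hρ : ∀ j, ‖ρ j‖ ≤ θ * ‖f (y j)‖) (j : ℕ) :
    NewtonInvariant f x₀ L t (y j) := by
  induction j with
  | zero =>
    rw [hy₀, NewtonInvariant, sub_self, norm_zero, mul_zero]
    exact ⟨ht₀, hf₀.trans_eq (by unfold residualMajorant; ring)⟩
  | succ j ih =>
    exact ih.of_inexactNewtonStep hL hf hf'₀ hLip ht₀ ht₁ hθ₀ hθ (hstep j) (hρ j)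

theorem one_sub_mul_norm_inexactNewtonStep_sub_le (hL : 0 < L)
    (hf : ∀ x ∈ closedBall x₀ L⁻¹, HasFDerivAt f (f' x) x)
    (hf'₀ : f' x₀ = ContinuousLinearMap.id ℝ E)
    (hLip : ∀ x ∈ closedBall x₀ L⁻¹, ∀ y ∈ closedBall x₀ L⁻¹, ‖f' y - f' x‖ ≤ L * ‖y - x‖)
    (ht₁ : t ≤ 1) (hθ₀ : 0 ≤ θ) {x x' ρ z : E} (hx : L * ‖x - x₀‖ ≤ t)
    (hz : L * ‖z - x₀‖ ≤ t) (hfz : f z = 0) (hstep : f' x (x' - x) = -f x + ρ)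
    (hρ : ‖ρ‖ ≤ θ * ‖f x‖) :
    (1 - t) * ‖x' - z‖ ≤ L / 2 * ‖x - z‖ ^ 2 + θ * (1 + t) * ‖x - z‖ := by
  have hsub : closedBall x₀ (t / L) ⊆ closedBall x₀ L⁻¹ :=
    closedBall_subset_closedBall (by rw [← one_div]; gcongr)
  have hxB := mem_closedBall_div_of_mul_norm_sub_le hL hx
  have hzB := mem_closedBall_div_of_mul_norm_sub_le hL hz
  have hfirst : ‖f x - f z - (x - z)‖ ≤ t * ‖x - z‖ := by
    refine (convex_closedBall x₀ (t / L)).norm_image_sub_le_of_norm_hasFDerivWithin_le'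
      (φ := ContinuousLinearMap.id ℝ E) (fun w hw => (hf w (hsub hw)).hasFDerivWithinAt)
      (fun w hw => ?_) hzB hxB
    rw [← hf'₀]
    calc ‖f' w - f' x₀‖ ≤ L * ‖w - x₀‖ :=
          hLip x₀ (mem_closedBall_self (inv_nonneg.2 hL.le)) w (hsub hw)
      _ ≤ t := by rwa [mem_closedBall_iff_norm, le_div_iff₀ hL, mul_comm] at hw
  have hfx : ‖f x‖ ≤ (1 + t) * ‖x - z‖ := by
    calc ‖f x‖ = ‖(f x - f z - (x - z)) + (x - z)‖ := by rw [hfz]; congr 1; abel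
      _ ≤ (1 + t) * ‖x - z‖ := by linarith [norm_add_le (f x - f z - (x - z)) (x - z)]
  have htaylor := (convex_closedBall x₀ L⁻¹).norm_image_sub_sub_le_of_hasFDerivAt_of_lipschitz
    hf hLip (hsub hxB) (hsub hzB)
  calc (1 - t) * ‖x' - z‖ ≤ (1 - L * ‖x - x₀‖) * ‖x' - z‖ := by gcongr
    _ ≤ ‖f' x (x' - z)‖ := one_sub_mul_norm_le_norm_fderiv_apply hL hf'₀ hLip (hsub hxB) _
    _ = ‖(f z - f x - f' x (z - x)) + ρ‖ := by
      rw [show x' - z = (x' - x) - (z - x) by abel, map_sub, hstep, hfz]; congr 1; abel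
    _ ≤ L / 2 * ‖z - x‖ ^ 2 + θ * ‖f x‖ := by grw [norm_add_le, htaylor, hρ]
    _ ≤ L / 2 * ‖x - z‖ ^ 2 + θ * ((1 + t) * ‖x - z‖) := by rw [norm_sub_rev z x]; gcongr
    _ = L / 2 * ‖x - z‖ ^ 2 + θ * (1 + t) * ‖x - z‖ := by ring

end Preconditioned

theorem stmt11_general
    {Y : Type*} [NormedAddCommGroup Y] [NormedSpace ℝ Y]
    (U : Set Y)
    (G : Y → Y) (DG : Y → Y →L[ℝ] Y)
    (hderiv : ∀ y ∈ U, HasFDerivAt G (DG y) y)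
    (y₀ : Y)
    (Dinv : Y →L[ℝ] Y)
    (hinv₁ : Dinv.comp (DG y₀) = ContinuousLinearMap.id ℝ Y)
    (β L : ℝ) (hL : 0 < L) (hβL : β * L < 1 / 2)
    (hball : closedBall y₀ L⁻¹ ⊆ U)
    (hLip : ∀ y ∈ closedBall y₀ L⁻¹, ∀ z ∈ closedBall y₀ L⁻¹,
      ‖Dinv.comp (DG z - DG y)‖ ≤ L * ‖z - y‖)
    (hres₀ : ‖Dinv (G y₀)‖ ≤ β)
    (θ : ℝ) (hθ0 : 0 ≤ θ)
    (hθ : θ ≤ (1 - Real.sqrt (2 * β * L)) / (1 + Real.sqrt (2 * β * L)))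
    (y : ℕ → Y) (r : ℕ → Y)
    (hy0 : y 0 = y₀)
    (hstep : ∀ j : ℕ, DG (y j) (y (j + 1) - y j) = -(G (y j)) + r j)
    (hrel : ∀ j : ℕ, ‖Dinv (r j)‖ ≤ θ * ‖Dinv (G (y j))‖) :
    (∀ j : ℕ, y j ∈ closedBall y₀ (Real.sqrt (2 * β * L) / L)) ∧
    ∀ ystar ∈ closedBall y₀ L⁻¹, G ystar = 0 →
      ∀ j : ℕ,
        ‖y (j + 1) - ystar‖ ≤
          (L * (1 + θ) / (2 * (1 - Real.sqrt (2 * β * L))) * ‖y j - ystar‖ +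
            θ * (1 + Real.sqrt (2 * β * L)) / (1 - Real.sqrt (2 * β * L))) *
          ‖y j - ystar‖ := by
  set t := Real.sqrt (2 * β * L)
  have ht₀ : 0 ≤ t := Real.sqrt_nonneg _
  have hβ₀ : 0 ≤ β := (norm_nonneg _).trans hres₀
  have ht_sq : t ^ 2 = 2 * β * L := Real.sq_sqrt (by positivity)
  have ht₁ : t < 1 := by nlinarith
  have hθt : θ * (1 + t) ≤ 1 - t := (le_div_iff₀ (by positivity)).1 hθ
  have hf : ∀ x ∈ closedBall y₀ L⁻¹,
      HasFDerivAt (fun x => Dinv (G x)) (Dinv.comp (DG x)) x :=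
    fun x hx => Dinv.hasFDerivAt.comp x (hderiv x (hball hx))
  have hLip' : ∀ x ∈ closedBall y₀ L⁻¹, ∀ z ∈ closedBall y₀ L⁻¹,
      ‖Dinv.comp (DG z) - Dinv.comp (DG x)‖ ≤ L * ‖z - x‖ := fun x hx z hz => by
    rw [← ContinuousLinearMap.comp_sub]; exact hLip x hx z hz
  have hstep' : ∀ j, Dinv.comp (DG (y j)) (y (j + 1) - y j) = -Dinv (G (y j)) + Dinv (r j) :=
    fun j => by simp [hstep j]
  have hf₀ : L * ‖Dinv (G y₀)‖ ≤ t ^ 2 / 2 := by nlinarith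
  have hinvariant := newtonInvariant_of_inexactNewton hL hf hinv₁ hLip' ht₀ ht₁ hθ0 hθt hf₀
    hy0 hstep' hrel
  refine ⟨fun j => mem_closedBall_div_of_mul_norm_sub_le hL (hinvariant j).1, ?_⟩
  intro z hz hGz j
  have hfz : Dinv (G z) = 0 := by rw [hGz, map_zero]
  have hzt := mul_norm_sub_le_of_apply_eq_zero hL hf hinv₁ hLip' ht₀ ht₁.le hf₀ hz hfz
  have herr := one_sub_mul_norm_inexactNewtonStep_sub_le hL hf hinv₁ hLip' ht₁.le hθ0
    (hinvariant j).1 hzt hfz (hstep' j) (hrel j)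
  have hgap : 0 < 1 - t := by linarith
  rw [show (L * (1 + θ) / (2 * (1 - t)) * ‖y j - z‖ + θ * (1 + t) / (1 - t)) * ‖y j - z‖ =
      (L * (1 + θ) / 2 * ‖y j - z‖ ^ 2 + θ * (1 + t) * ‖y j - z‖) / (1 - t) by
    field_simp, le_div_iff₀ hgap]
  nlinarith [mul_nonneg (mul_nonneg hL.le hθ0) (sq_nonneg ‖y j - z‖)]

/-- Inexact Newton–Kantorovich iteration estimates: under the
Newton–Kantorovich hypotheses, if the inexact Newton iterates `y_{j+1} = y_j + δ_j` with
`DG(y_j) δ_j = −G(y_j) + r_j` satisfy the relative residual bound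
`‖DG(y₀)⁻¹ r_j‖ ≤ θ ‖DG(y₀)⁻¹ G(y_j)‖` with
`θ ≤ (1 − √(2βL))/(1 + √(2βL))`, then every iterate lies in `B(y₀, √(2βL)/L)` and, with
`y*` the (unique) zero of `G` in `B(y₀, L⁻¹)`,
`‖y_{j+1} − y*‖ ≤ [L(1+θ)/(2(1−√(2βL)))·‖y_j − y*‖ + θ(1+√(2βL))/(1−√(2βL))]·‖y_j − y*‖`. -/
theorem stmt11
    {Y : Type*} [NormedAddCommGroup Y] [NormedSpace ℝ Y] [CompleteSpace Y]
    (U : Set Y) (hU : IsOpen U)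
    (G : Y → Y) (DG : Y → Y →L[ℝ] Y)
    (hderiv : ∀ y ∈ U, HasFDerivAt G (DG y) y)
    (hcont : ContinuousOn DG U)
    (y₀ : Y) (hy₀ : y₀ ∈ U)
    (Dinv : Y →L[ℝ] Y)
    (hinv₁ : Dinv.comp (DG y₀) = ContinuousLinearMap.id ℝ Y)
    (hinv₂ : (DG y₀).comp Dinv = ContinuousLinearMap.id ℝ Y)
    (β L : ℝ) (hβ : 0 < β) (hL : 0 < L) (hβL : β * L < 1 / 2)
    (hball : closedBall y₀ L⁻¹ ⊆ U)
    (hLip : ∀ y ∈ closedBall y₀ L⁻¹, ∀ z ∈ closedBall y₀ L⁻¹,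
      ‖Dinv.comp (DG z - DG y)‖ ≤ L * ‖z - y‖)
    (hres₀ : ‖Dinv (G y₀)‖ ≤ β)
    (θ : ℝ) (hθ0 : 0 ≤ θ)
    (hθ : θ ≤ (1 - Real.sqrt (2 * β * L)) / (1 + Real.sqrt (2 * β * L)))
    (y : ℕ → Y) (r : ℕ → Y)
    (hy0 : y 0 = y₀)
    (hbij : ∀ j : ℕ, Function.Bijective (DG (y j)))
    (hstep : ∀ j : ℕ, DG (y j) (y (j + 1) - y j) = -(G (y j)) + r j)
    (hrel : ∀ j : ℕ, ‖Dinv (r j)‖ ≤ θ * ‖Dinv (G (y j))‖) :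
    (∀ j : ℕ, y j ∈ closedBall y₀ (Real.sqrt (2 * β * L) / L)) ∧
    ∀ ystar ∈ closedBall y₀ L⁻¹, G ystar = 0 →
      ∀ j : ℕ,
        ‖y (j + 1) - ystar‖ ≤
          (L * (1 + θ) / (2 * (1 - Real.sqrt (2 * β * L))) * ‖y j - ystar‖ +
            θ * (1 + Real.sqrt (2 * β * L)) / (1 - Real.sqrt (2 * β * L))) *
          ‖y j - ystar‖ :=
  stmt11_general U G DG hderiv y₀ Dinv hinv₁ β L hL hβL hball hLip hres₀ θ hθ0 hθ y r hy0 hstep hrel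
end
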